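/- arXiv:math/0006081 — 2 statements merged into one kernel-verified Lean document; each statement's English description precedes it below -/
import Mathlib

section
/- Let G be a topological group, let (X, e) be a greatest ambit for G, and let M be a nonempty closed G-invariant subset of X that is minimal (has no proper nonempty closed G-invariant subset). Then every G-map f : M → M is bijective. -/
/-!
Writing `x * y` for `lift y x`, where `lift y` is the unique `G`-map of the greatest ambit with
`e ↦ y`, turns `X` into a compact semigroup with continuous right multiplications, in which a
closed invariant set is a left ideal. A minimal one `M` thus contains an idempotent `u`, which is
a right identity on `M` because `M * u = M`. A `G`-map `f : M → M` is right multiplication by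
`f u`: both `x ↦ f (x * u)` and `x ↦ x * f u` are `G`-maps sending `e` to `f u`. Finally right
multiplication by any `a ∈ M` is a bijection of `M`, as `M * a = M` and, choosing `b ∈ M` with
`b * a = u`, right multiplication by `b` inverts it on `M`.
-/

universe u v

open Set Function

def IsGreatestAmbit (G : Type u) [Monoid G] [TopologicalSpace G] (X : Type v)
    [TopologicalSpace X] [MulAction G X] (e : X) : Prop :=
  ∀ (Y : Type v) [TopologicalSpace Y] [CompactSpace Y] [T2Space Y]
    [MulAction G Y] [ContinuousSMul G Y] (y : Y),
    ∃! f : X → Y, Continuous f ∧ (∀ (g : G) (x : X), f (g • x) = g • f x) ∧ f e = y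

structure IsMinimalClosedInvariant (G : Type u) [Monoid G] {X : Type v} [TopologicalSpace X]
    [MulAction G X] (M : Set X) : Prop where
  isClosed : IsClosed M
  smul_mem : ∀ (g : G), ∀ x ∈ M, g • x ∈ M
  eq_of_subset :
    ∀ Z ⊆ M, Z.Nonempty → IsClosed Z → (∀ (g : G), ∀ x ∈ Z, g • x ∈ Z) → Z = M

namespace IsGreatestAmbit

variable {G : Type u} [Monoid G] [TopologicalSpace G] {X : Type v} [TopologicalSpace X]
  [MulAction G X] {e : X}
  {Y : Type v} [TopologicalSpace Y] [CompactSpace Y] [T2Space Y] [MulAction G Y]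
  [ContinuousSMul G Y]

noncomputable def lift (h : IsGreatestAmbit G X e) (y : Y) : X → Y := (h Y y).exists.choose

theorem continuous_lift (h : IsGreatestAmbit G X e) (y : Y) : Continuous (h.lift y) :=
  (h Y y).exists.choose_spec.1

theorem lift_smul (h : IsGreatestAmbit G X e) (y : Y) (g : G) (x : X) :
    h.lift y (g • x) = g • h.lift y x :=
  (h Y y).exists.choose_spec.2.1 g x

@[simp]
theorem lift_base (h : IsGreatestAmbit G X e) (y : Y) : h.lift y e = y :=
  (h Y y).exists.choose_spec.2.2

theorem eq_lift (h : IsGreatestAmbit G X e) {φ : X → Y} (hφ : Continuous φ)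
    (hφ_smul : ∀ (g : G) (x : X), φ (g • x) = g • φ x) :
    φ = h.lift (φ e) :=
  (h Y (φ e)).unique ⟨hφ, hφ_smul, rfl⟩
    ⟨h.continuous_lift _, h.lift_smul _, h.lift_base _⟩

variable [ContinuousSMul G X] [CompactSpace X] [T2Space X]

theorem lift_base_eq_id (h : IsGreatestAmbit G X e) : h.lift e = id :=
  (h.eq_lift continuous_id fun _ _ ↦ rfl).symm

theorem eq_univ_of_isClosed (h : IsGreatestAmbit G X e) {S : Set X} (hS : IsClosed S)
    (hS_smul : ∀ (g : G), ∀ x ∈ S, g • x ∈ S) (he : e ∈ S) : S = univ := by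
  let S' : SubMulAction G X := ⟨S, fun g {x} hx ↦ hS_smul g x hx⟩
  have : CompactSpace S' := isCompact_iff_compactSpace.mp hS.isCompact
  let j := h.lift (⟨e, he⟩ : S')
  have hj : Subtype.val ∘ j = id := by
    rw [← h.lift_base_eq_id, h.eq_lift (φ := Subtype.val ∘ j)
      (continuous_subtype_val.comp (h.continuous_lift _))
      fun g x ↦ congrArg Subtype.val (h.lift_smul _ g x)]
    simp only [comp_apply, j, lift_base]
  refine eq_univ_of_forall fun x ↦ ?_
  rw [← id_eq x, ← hj]
  exact (j x).2

theorem lift_mem (h : IsGreatestAmbit G X e) {S : Set Y} (hS : IsClosed S)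
    (hS_smul : ∀ (g : G), ∀ y ∈ S, g • y ∈ S)
    {y : Y} (hy : y ∈ S) (x : X) : h.lift y x ∈ S := by
  have := h.eq_univ_of_isClosed (hS.preimage (h.continuous_lift y))
    (fun g x hx ↦ by simpa only [mem_preimage, h.lift_smul] using hS_smul g _ hx)
    (by simpa only [mem_preimage, lift_base])
  exact eq_univ_iff_forall.mp this x

theorem lift_lift (h : IsGreatestAmbit G X e) (x y : X) :
    h.lift (h.lift y x) = h.lift y ∘ h.lift x := by
  rw [h.eq_lift ((h.continuous_lift y).comp (h.continuous_lift x)) fun g z ↦ by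
    simp only [comp_apply, lift_smul]]
  simp only [comp_apply, lift_base]

theorem exists_lift_self_eq (h : IsGreatestAmbit G X e) {M : Set X} (hM : IsClosed M)
    (hM_ne : M.Nonempty) (hM_smul : ∀ (g : G), ∀ x ∈ M, g • x ∈ M) :
    ∃ u ∈ M, h.lift u u = u := by
  let : Semigroup X :=
    { mul := fun x y ↦ h.lift y x
      mul_assoc := fun x y z ↦ (congrFun (h.lift_lift y z) x).symm }
  exact exists_idempotent_in_compact_subsemigroup h.continuous_lift M hM_ne hM.isCompact
    fun x _ y hy ↦ h.lift_mem hM hM_smul hy x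

variable {M : Set X}

theorem lift_image_eq (h : IsGreatestAmbit G X e) (hM : IsMinimalClosedInvariant G M)
    {m : X} (hm : m ∈ M) : h.lift m '' M = M := by
  refine hM.eq_of_subset _ (image_subset_iff.2 fun x _ ↦ h.lift_mem hM.isClosed hM.smul_mem hm x)
    (Set.Nonempty.image _ ⟨m, hm⟩)
    ((hM.isClosed.isCompact.image (h.continuous_lift m)).isClosed) ?_
  rintro g _ ⟨x, hx, rfl⟩
  exact ⟨g • x, hM.smul_mem g x hx, h.lift_smul m g x⟩

theorem lift_apply_of_lift_self_eq (h : IsGreatestAmbit G X e) (hM : IsMinimalClosedInvariant G M)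
    {u : X} (hu : u ∈ M) (huu : h.lift u u = u) {m : X} (hm : m ∈ M) : h.lift u m = m := by
  rw [← h.lift_image_eq hM hu] at hm
  obtain ⟨x, -, rfl⟩ := hm
  rw [← comp_apply (f := h.lift u), ← h.lift_lift, huu]

theorem bijOn_lift (h : IsGreatestAmbit G X e) (hM : IsMinimalClosedInvariant G M)
    {a : X} (ha : a ∈ M) : BijOn (h.lift a) M M := by
  obtain ⟨u, hu, huu⟩ := h.exists_lift_self_eq hM.isClosed ⟨a, ha⟩ hM.smul_mem
  obtain ⟨b, hb, hba⟩ : u ∈ h.lift a '' M := (h.lift_image_eq hM ha).symm ▸ hu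
  have hab : ∀ n ∈ M, h.lift a (h.lift b n) = n := fun n hn ↦ by
    rw [← comp_apply (f := h.lift a), ← h.lift_lift, hba,
      h.lift_apply_of_lift_self_eq hM hu huu hn]
  have hinv : LeftInvOn (h.lift b) (h.lift a) M := by
    intro m hm
    rw [← h.lift_image_eq hM hb] at hm
    obtain ⟨n, hn, rfl⟩ := hm
    rw [hab n hn]
  exact ⟨fun x _ ↦ h.lift_mem hM.isClosed hM.smul_mem ha x, hinv.injOn,
    (h.lift_image_eq hM ha).superset⟩

theorem exists_coe_apply_eq_lift (h : IsGreatestAmbit G X e) (hM_ne : M.Nonempty)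
    (hM : IsMinimalClosedInvariant G M)
    {f : M → M} (hf : Continuous f)
    (hf_smul : ∀ (g : G) (x : M),
      f ⟨g • (x : X), hM.smul_mem g x x.2⟩ = ⟨g • (f x : X), hM.smul_mem g _ (f x).2⟩) :
    ∃ a ∈ M, ∀ m : M, (f m : X) = h.lift a m := by
  obtain ⟨u, hu, huu⟩ := h.exists_lift_self_eq hM.isClosed hM_ne hM.smul_mem
  have hu_mem : ∀ x, h.lift u x ∈ M := h.lift_mem hM.isClosed hM.smul_mem hu
  let F : X → X := fun x ↦ f ⟨h.lift u x, hu_mem x⟩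
  have hF_smul (g : G) (x : X) : F (g • x) = g • F x := by
    have : (⟨h.lift u (g • x), hu_mem _⟩ : M) =
        ⟨g • h.lift u x, hM.smul_mem g _ (hu_mem x)⟩ :=
      Subtype.ext (h.lift_smul u g x)
    simp only [F]
    rw [this]
    exact congrArg Subtype.val (hf_smul g ⟨_, _⟩)
  have hF : F = h.lift (f ⟨u, hu⟩ : X) := by
    have hF_cont : Continuous F :=
      continuous_subtype_val.comp (hf.comp ((h.continuous_lift u).subtype_mk _))
    rw [h.eq_lift hF_cont hF_smul]
    simp only [F, lift_base]
  refine ⟨f ⟨u, hu⟩, (f _).2, fun m ↦ ?_⟩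
  have hm : (⟨h.lift u m, hu_mem m⟩ : M) = m :=
    Subtype.ext (h.lift_apply_of_lift_self_eq hM hu huu m.2)
  rw [← hF]
  simp only [F, hm]

end IsGreatestAmbit

theorem statement15_general (G : Type u) [Group G] [TopologicalSpace G]
    (X : Type v) [TopologicalSpace X] [CompactSpace X] [T2Space X]
    [MulAction G X] [ContinuousSMul G X] (e : X)
    (hambit : ∀ (Y : Type v) [TopologicalSpace Y] [CompactSpace Y] [T2Space Y]
      [MulAction G Y] [ContinuousSMul G Y] (y : Y),
      ∃! f : X → Y, Continuous f ∧ (∀ (g : G) (x : X), f (g • x) = g • f x) ∧ f e = y)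
    (M : Set X) (hMne : M.Nonempty) (hMc : IsClosed M)
    (hMinv : ∀ (g : G), ∀ x ∈ M, g • x ∈ M)
    (hMmin : ∀ Z : Set X, Z ⊆ M → Z.Nonempty → IsClosed Z →
      (∀ (g : G), ∀ x ∈ Z, g • x ∈ Z) → Z = M)
    (f : M → M) (hfc : Continuous f)
    (hfe : ∀ (g : G) (x : M), f ⟨g • (x : X), hMinv g x x.2⟩ = ⟨g • (f x : X), hMinv g _ (f x).2⟩) :
    Function.Bijective f := by
  have h : IsGreatestAmbit G X e := hambit
  have hM : IsMinimalClosedInvariant G M := ⟨hMc, hMinv, hMmin⟩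
  obtain ⟨a, ha, hfa⟩ := h.exists_coe_apply_eq_lift hMne hM hfc hfe
  have hbij := h.bijOn_lift hM ha
  have : f = hbij.mapsTo.restrict := funext fun m ↦ Subtype.ext (hfa m)
  exact this ▸ hbij.bijective

/-- Every `G`-self-map of a minimal closed `G`-invariant subset `M` of the greatest ambit
`(X, e)` is bijective. -/
theorem statement15 (G : Type u) [Group G] [TopologicalSpace G] [IsTopologicalGroup G]
    (X : Type v) [TopologicalSpace X] [CompactSpace X] [T2Space X] [Nonempty X]
    [MulAction G X] [ContinuousSMul G X] (e : X)
    (hambit : ∀ (Y : Type v) [TopologicalSpace Y] [CompactSpace Y] [T2Space Y]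
      [MulAction G Y] [ContinuousSMul G Y] (y : Y),
      ∃! f : X → Y, Continuous f ∧ (∀ (g : G) (x : X), f (g • x) = g • f x) ∧ f e = y)
    (M : Set X) (hMne : M.Nonempty) (hMc : IsClosed M)
    (hMinv : ∀ (g : G), ∀ x ∈ M, g • x ∈ M)
    (hMmin : ∀ Z : Set X, Z ⊆ M → Z.Nonempty → IsClosed Z →
      (∀ (g : G), ∀ x ∈ Z, g • x ∈ Z) → Z = M)
    (f : M → M) (hfc : Continuous f)
    (hfe : ∀ (g : G) (x : M), f ⟨g • (x : X), hMinv g x x.2⟩ = ⟨g • (f x : X), hMinv g _ (f x).2⟩) :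
    Function.Bijective f :=
  statement15_general G X e hambit M hMne hMc hMinv hMmin f hfc hfe
end

section
/- Let G be a topological group and let M be a universal minimal compact G-space. Then every G-map f : M → M is bijective, and hence a G-equivariant homeomorphism of M onto itself. -/
universe u v

/-!
Let `I` be a minimal left ideal of the Ellis semigroup `E(M)`, the closure of the translations
of `M` in `M → M`. Any continuous equivariant `h : I → I` commutes with all of `E(M)` (it does
so with the dense set of translations), hence `h p = h (p ∘ u) = p ∘ h u` for an idempotent
`u ∈ I`; and right multiplication by an element of `I` is injective on `I`, since a left inverse
modulo `u` produces a further idempotent acting as a right identity. By universality there is a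
`G`-map `φ : M → I`, and evaluation at a point maps `I` onto `M` by minimality, so for a
`G`-map `f : M → M` the endomorphism `p ↦ φ (f (p x₀))` of `I` is injective, forcing `f` to be
injective. Surjectivity of `f` is minimality of `M`.
-/

open Function Set

section Subflow

variable {G : Type*} {X : Type*} [TopologicalSpace X] [SMul G X]

variable (G) in
structure IsSubflow (A : Set X) : Prop where
  nonempty : A.Nonempty
  isClosed : IsClosed A
  smul_mem : ∀ (g : G), ∀ x ∈ A, g • x ∈ A

theorem isSubflow_univ [Nonempty X] : IsSubflow G (univ : Set X) :=
  ⟨univ_nonempty, isClosed_univ, fun _ _ _ => trivial⟩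

theorem exists_minimal_isSubflow_subset [CompactSpace X] {A : Set X} (hA : IsSubflow G A) :
    ∃ I ⊆ A, Minimal (IsSubflow G) I := by
  refine zorn_superset_nonempty _ (fun c hc hchain hcne => ?_) A hA
  refine ⟨⋂₀ c, ⟨?_, isClosed_sInter fun B hB => (hc hB).isClosed, ?_⟩,
    fun B hB => sInter_subset_of_mem hB⟩
  · have : Nonempty c := hcne.to_subtype
    exact IsCompact.nonempty_sInter_of_directed_nonempty_isCompact_isClosed
      (IsChain.directedOn (r := (· ≥ ·)) hchain.symm) (fun B hB => (hc hB).nonempty)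
      (fun B hB => (hc hB).isClosed.isCompact) (fun B hB => (hc hB).isClosed)
  · exact fun g x hx => mem_sInter.2 fun B hB => (hc hB).smul_mem g x (mem_sInter.1 hx B hB)

theorem IsSubflow.image_eq_of_minimal [CompactSpace X] {Y : Type*} [TopologicalSpace Y]
    [T2Space Y] [SMul G Y] {K : Set X} (hK : IsSubflow G K) {I : Set Y}
    (hI : Minimal (IsSubflow G) I) {f : X → Y} (hf : ContinuousOn f K) (hfI : MapsTo f K I)
    (hfeq : ∀ g : G, ∀ x ∈ K, f (g • x) = g • f x) : f '' K = I := by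
  refine hI.eq_of_subset ⟨hK.nonempty.image f, ?_, ?_⟩ hfI.image_subset
  · exact (hK.isClosed.isCompact.image_of_continuousOn hf).isClosed
  · rintro g _ ⟨x, hx, rfl⟩
    exact ⟨g • x, hK.smul_mem g x hx, hfeq g x hx⟩

end Subflow

theorem exists_idempotent_comp_of_isCompact {X : Type*} [TopologicalSpace X] [T2Space X]
    {S : Set (X → X)} (hne : S.Nonempty) (hS : IsCompact S)
    (hcomp : ∀ p ∈ S, ∀ q ∈ S, p ∘ q ∈ S) : ∃ u ∈ S, u ∘ u = u :=
  @exists_idempotent_in_compact_subsemigroup (Function.End X) _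
    (inferInstanceAs (TopologicalSpace (X → X))) (inferInstanceAs (T2Space (X → X)))
    Pi.continuous_precomp S hne hS hcomp

section Ellis

variable {G : Type*} [Monoid G] {M : Type*} [TopologicalSpace M] [MulAction G M]

variable (G M) in
def ellis : Set (M → M) :=
  closure (range fun g : G => (g • · : M → M))

variable (G M) in
theorem isSubflow_ellis [ContinuousConstSMul G M] : IsSubflow G (ellis G M) := by
  refine ⟨⟨_, subset_closure ⟨1, rfl⟩⟩, isClosed_closure, fun g p hp => ?_⟩
  refine map_mem_closure (continuous_const_smul g) hp ?_
  rintro _ ⟨g', rfl⟩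
  exact ⟨g * g', funext fun x => mul_smul g g' x⟩

theorem comp_mem_of_mem_ellis {A : Set (M → M)} (hA : IsClosed A)
    (hAinv : ∀ g : G, ∀ q ∈ A, g • q ∈ A) {p q : M → M} (hp : p ∈ ellis G M) (hq : q ∈ A) :
    p ∘ q ∈ A :=
  closure_minimal (t := (· ∘ q) ⁻¹' A) (range_subset_iff.2 fun g => hAinv g q hq)
    (hA.preimage (Pi.continuous_precomp q)) hp

theorem eqOn_comp_of_equivariant [T2Space M] {I : Set (M → M)} (hIcl : IsClosed I)
    (hIinv : ∀ g : G, ∀ p ∈ I, g • p ∈ I) {h : (M → M) → (M → M)} (hh : ContinuousOn h I)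
    (hheq : ∀ g : G, ∀ p ∈ I, h (g • p) = g • h p) {q : M → M} (hq : q ∈ I) :
    EqOn (fun p => h (p ∘ q)) (fun p => p ∘ h q) (ellis G M) := by
  refine EqOn.of_subset_closure ?_ ?_ (Pi.continuous_precomp (h q)).continuousOn subset_closure
    subset_rfl
  · rintro _ ⟨g, rfl⟩
    exact hheq g q hq
  · exact hh.comp (Pi.continuous_precomp q).continuousOn
      fun p hp => comp_mem_of_mem_ellis hIcl hIinv hp hq

variable (G) in
/-- The minimal subflows of the Ellis semigroup are exactly its minimal left ideals. -/
structure IsMinimalLeftIdeal (I : Set (M → M)) : Prop where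
  minimal : Minimal (IsSubflow G) I
  subset_ellis : I ⊆ ellis G M

variable (G M) in
theorem exists_isMinimalLeftIdeal [CompactSpace M] [ContinuousConstSMul G M] :
    ∃ I : Set (M → M), IsMinimalLeftIdeal G I :=
  let ⟨I, hIE, hI⟩ := exists_minimal_isSubflow_subset (isSubflow_ellis G M)
  ⟨I, hI, hIE⟩

namespace IsMinimalLeftIdeal

variable {I : Set (M → M)}

theorem isSubflow (hI : IsMinimalLeftIdeal G I) : IsSubflow G I := hI.minimal.prop

theorem comp_mem (hI : IsMinimalLeftIdeal G I) {p q : M → M} (hp : p ∈ I) (hq : q ∈ I) :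
    p ∘ q ∈ I :=
  comp_mem_of_mem_ellis hI.isSubflow.isClosed hI.isSubflow.smul_mem (hI.subset_ellis hp) hq

variable [CompactSpace M] [T2Space M]

theorem image_comp_right (hI : IsMinimalLeftIdeal G I) {c : M → M} (hc : c ∈ I) :
    (· ∘ c) '' I = I :=
  hI.isSubflow.image_eq_of_minimal hI.minimal (Pi.continuous_precomp c).continuousOn
    (fun _ hp => hI.comp_mem hp hc) fun _ _ _ => rfl

theorem exists_idempotent (hI : IsMinimalLeftIdeal G I) : ∃ u ∈ I, u ∘ u = u :=
  exists_idempotent_comp_of_isCompact hI.isSubflow.nonempty hI.isSubflow.isClosed.isCompact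
    fun _ hp _ hq => hI.comp_mem hp hq

theorem comp_eq_of_idempotent (hI : IsMinimalLeftIdeal G I) {u : M → M} (hu : u ∈ I)
    (huu : u ∘ u = u) {p : M → M} (hp : p ∈ I) : p ∘ u = p := by
  obtain ⟨r, -, rfl⟩ : p ∈ (· ∘ u) '' I := (hI.image_comp_right hu).symm ▸ hp
  change r ∘ (u ∘ u) = r ∘ u
  rw [huu]

theorem injOn_comp_right (hI : IsMinimalLeftIdeal G I) {c : M → M} (hc : c ∈ I) :
    InjOn (· ∘ c) I := by
  obtain ⟨u, hu, huu⟩ := hI.exists_idempotent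
  obtain ⟨c', hc', hc'c⟩ : u ∈ (· ∘ c) '' I := (hI.image_comp_right hc).symm ▸ hu
  have hv : (c ∘ c') ∘ (c ∘ c') = c ∘ c' := by
    change c ∘ (c' ∘ c) ∘ c' = c ∘ c'
    rw [show c' ∘ c = u from hc'c, ← comp_assoc, hI.comp_eq_of_idempotent hu huu hc]
  intro p hp q hq hpq
  calc p = (p ∘ c) ∘ c' := (hI.comp_eq_of_idempotent (hI.comp_mem hc hc') hv hp).symm
    _ = (q ∘ c) ∘ c' := congrArg (· ∘ c') hpq
    _ = q := hI.comp_eq_of_idempotent (hI.comp_mem hc hc') hv hq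

/-- Every `G`-endomorphism of a minimal left ideal is right multiplication by an element. -/
theorem injOn_of_equivariant (hI : IsMinimalLeftIdeal G I) {h : (M → M) → (M → M)}
    (hh : ContinuousOn h I) (hhI : MapsTo h I I) (hheq : ∀ g : G, ∀ p ∈ I, h (g • p) = g • h p) :
    InjOn h I := by
  obtain ⟨u, hu, huu⟩ := hI.exists_idempotent
  have hform : ∀ p ∈ I, h p = p ∘ h u := fun p hp => by
    calc h p = h (p ∘ u) := by rw [hI.comp_eq_of_idempotent hu huu hp]
      _ = p ∘ h u := eqOn_comp_of_equivariant hI.isSubflow.isClosed hI.isSubflow.smul_mem hh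
          hheq hu (hI.subset_ellis hp)
  intro p hp q hq hpq
  exact hI.injOn_comp_right (hhI hu) hp hq (by simpa only [hform p hp, hform q hq] using hpq)

end IsMinimalLeftIdeal

end Ellis

instance SubMulAction.continuousSMul {G X : Type*} [Monoid G] [TopologicalSpace G]
    [TopologicalSpace X] [MulAction G X] [ContinuousSMul G X] (S : SubMulAction G X) :
    ContinuousSMul G S :=
  ⟨(continuous_fst.smul (continuous_subtype_val.comp continuous_snd)).subtype_mk _⟩

theorem statement16_general (G : Type u) [Group G] [TopologicalSpace G]
    (M : Type v) [TopologicalSpace M] [CompactSpace M] [T2Space M] [Nonempty M]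
    [MulAction G M] [ContinuousSMul G M]
    (hmin : ∀ A : Set M, A.Nonempty → IsClosed A →
      (∀ (g : G), ∀ x ∈ A, g • x ∈ A) → A = Set.univ)
    (huniv : ∀ (Y : Type v) [TopologicalSpace Y] [CompactSpace Y] [T2Space Y]
      [MulAction G Y] [ContinuousSMul G Y], Nonempty Y →
      ∃ f : M → Y, Continuous f ∧ ∀ (g : G) (x : M), f (g • x) = g • f x) :
    ∀ f : M → M, Continuous f → (∀ (g : G) (x : M), f (g • x) = g • f x) →
      Function.Bijective f ∧
        ∃ h : M ≃ₜ M, (∀ x : M, h x = f x) ∧ ∀ (g : G) (x : M), h (g • x) = g • h x := by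
  intro f hf hfeq
  have hM : Minimal (IsSubflow G) (univ : Set M) :=
    ⟨isSubflow_univ, fun A hA _ => (hmin A hA.nonempty hA.isClosed hA.smul_mem).ge⟩
  have hsurj : Surjective f := by
    rw [← range_eq_univ, ← image_univ]
    exact isSubflow_univ.image_eq_of_minimal hM hf.continuousOn (mapsTo_univ _ _)
      fun g x _ => hfeq g x
  obtain ⟨I, hI⟩ := exists_isMinimalLeftIdeal G M
  let I' : SubMulAction G (M → M) := ⟨I, fun g _ hp => hI.isSubflow.smul_mem g _ hp⟩
  have : CompactSpace I' := isCompact_iff_compactSpace.mp hI.isSubflow.isClosed.isCompact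
  obtain ⟨φ, hφ, hφeq⟩ := huniv I' hI.isSubflow.nonempty.to_subtype
  obtain ⟨x₀⟩ := ‹Nonempty M›
  have hev : (fun p : M → M => p x₀) '' I = univ :=
    hI.isSubflow.image_eq_of_minimal hM (continuous_apply x₀).continuousOn (mapsTo_univ _ _)
      fun _ _ _ => rfl
  have hinj : InjOn (fun p => (φ (f (p x₀)) : M → M)) I :=
    hI.injOn_of_equivariant (by fun_prop) (fun p _ => (φ (f (p x₀))).2)
      fun g p _ => by simp only [Pi.smul_apply, hfeq, hφeq, SubMulAction.val_smul]
  have hfinj : Injective f := by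
    intro a b hab
    obtain ⟨p, hp, rfl⟩ : a ∈ _ '' I := hev ▸ mem_univ a
    obtain ⟨q, hq, rfl⟩ : b ∈ _ '' I := hev ▸ mem_univ b
    exact congrFun (hinj hp hq (by simp only [hab])) x₀
  exact ⟨⟨hfinj, hsurj⟩, hf.homeoOfEquivCompactToT2 (f := Equiv.ofBijective f ⟨hfinj, hsurj⟩),
    fun _ => rfl, hfeq⟩

/-- Every `G`-self-map of a universal minimal compact `G`-space `M` is bijective, hence a
`G`-equivariant homeomorphism of `M` onto itself. -/
theorem statement16 (G : Type u) [Group G] [TopologicalSpace G] [IsTopologicalGroup G]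
    (M : Type v) [TopologicalSpace M] [CompactSpace M] [T2Space M] [Nonempty M]
    [MulAction G M] [ContinuousSMul G M]
    (hmin : ∀ A : Set M, A.Nonempty → IsClosed A →
      (∀ (g : G), ∀ x ∈ A, g • x ∈ A) → A = Set.univ)
    (huniv : ∀ (Y : Type v) [TopologicalSpace Y] [CompactSpace Y] [T2Space Y]
      [MulAction G Y] [ContinuousSMul G Y], Nonempty Y →
      ∃ f : M → Y, Continuous f ∧ ∀ (g : G) (x : M), f (g • x) = g • f x) :
    ∀ f : M → M, Continuous f → (∀ (g : G) (x : M), f (g • x) = g • f x) →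
      Function.Bijective f ∧
        ∃ h : M ≃ₜ M, (∀ x : M, h x = f x) ∧ ∀ (g : G) (x : M), h (g • x) = g • h x :=
  statement16_general G M hmin huniv
end
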